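/- arXiv:1408.2334 — 4 statements merged into one kernel-verified Lean document; each statement's English description precedes it below -/
import Mathlib

section
/- Let α > 1/2 be a real number, let N be a finite set of positive integers, and let c : N → ℂ. Then Σ_{n=1}^{∞} | Σ_{k ∈ N, k ∣ n} c(k) · k^{α}/n^{α} |^2 = ζ(2α) · Σ_{m, n ∈ N} c(m) · conj(c(n)) · gcd(m,n)^{2α}/(m n)^{α}, where both sides converge. -/
/-!
Expanding the square, `|a n|² = ∑_{k,l ∈ N} c k · conj (c l) · (k l)^α · [lcm k l ∣ n] / n^{2α}`,
because `k ∣ n ∧ l ∣ n ↔ lcm k l ∣ n`. Over the multiples of `L = lcm k l` the Dirichlet series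
of `ζ` sums to `ζ(2α) / L^{2α}`, and `gcd k l · lcm k l = k l` turns `(k l)^α / L^{2α}` into
`gcd k l ^ {2α} / (k l)^α`. There are finitely many pairs `(k, l)`, so the sums can be exchanged.
-/

open Real Finset ComplexConjugate

theorem hasSum_ite_dvd_one_div_cpow {L : ℕ} (hL : L ≠ 0) {s : ℂ} (hs : 1 < s.re) :
    HasSum (fun n : ℕ => if L ∣ n then 1 / (n : ℂ) ^ s else 0) (riemannZeta s / (L : ℂ) ^ s) := by
  have hζ : HasSum (fun m : ℕ => 1 / (m : ℂ) ^ s) (riemannZeta s) := by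
    rw [zeta_eq_tsum_one_div_nat_cpow hs]
    exact (Complex.summable_one_div_nat_cpow.mpr hs).hasSum
  have hmul : Function.Injective (L * ·) := mul_right_injective₀ hL
  rw [← hmul.hasSum_iff (by rintro n hn; simp [show ¬L ∣ n from fun ⟨m, hm⟩ => hn ⟨m, hm.symm⟩])]
  have hterm : (fun n : ℕ => if L ∣ n then 1 / (n : ℂ) ^ s else 0) ∘ (L * ·) =
      fun m : ℕ => 1 / (m : ℂ) ^ s / (L : ℂ) ^ s := by
    funext m
    simp [Complex.natCast_mul_natCast_cpow, div_eq_mul_inv, mul_comm]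
  exact hterm ▸ hζ.div_const _

theorem Nat.cast_mul_rpow_div_cast_lcm_rpow {k l : ℕ} (hk : k ≠ 0) (hl : l ≠ 0) (α : ℝ) :
    ((k * l : ℕ) : ℝ) ^ α / (Nat.lcm k l : ℝ) ^ (2 * α) =
      (Nat.gcd k l : ℝ) ^ (2 * α) / ((k * l : ℕ) : ℝ) ^ α := by
  have hkl : (0 : ℝ) < ((k * l : ℕ) : ℝ) := by positivity
  have hsq : ((k * l : ℕ) : ℝ) ^ α * ((k * l : ℕ) : ℝ) ^ α =
      (Nat.gcd k l : ℝ) ^ (2 * α) * (Nat.lcm k l : ℝ) ^ (2 * α) := by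
    rw [← Real.rpow_add hkl, ← two_mul, ← Real.mul_rpow (by positivity) (by positivity),
      ← Nat.cast_mul, Nat.gcd_mul_lcm]
  have hlcm : (0 : ℝ) < (Nat.lcm k l : ℝ) ^ (2 * α) := by
    have := Nat.lcm_ne_zero hk hl
    positivity
  field_simp
  linear_combination hsq

theorem Complex.ofReal_norm_sum_sq {ι : Type*} (s : Finset ι) (z : ι → ℂ) :
    (‖∑ i ∈ s, z i‖ : ℂ) ^ 2 = ∑ i ∈ s, ∑ j ∈ s, z i * conj (z j) := by
  rw [← Complex.mul_conj', map_sum, sum_mul_sum]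

theorem sq_norm_sum_filter_dvd (α : ℝ) (N : Finset ℕ) (c : ℕ → ℂ) (n : ℕ) :
    (‖∑ k ∈ N.filter (· ∣ n), c k * (((k : ℝ) ^ α / (n : ℝ) ^ α : ℝ) : ℂ)‖ : ℂ) ^ 2 =
      ∑ k ∈ N, ∑ l ∈ N, c k * conj (c l) * ((((k * l : ℕ) : ℝ) ^ α : ℝ) *
        if Nat.lcm k l ∣ n then 1 / (n : ℂ) ^ (2 * α : ℂ) else 0) := by
  have hn : (n : ℂ) ^ (2 * α : ℂ) = (((n : ℝ) ^ α : ℝ) : ℂ) ^ 2 := by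
    rw [Complex.ofReal_cpow n.cast_nonneg, Complex.ofReal_natCast, Complex.cpow_ofNat_mul]
  simp only [Complex.ofReal_norm_sum_sq, sum_filter, Nat.lcm_dvd_iff, ite_and, mul_ite, mul_zero]
  refine sum_congr rfl fun k _ => ?_
  split_ifs with hk
  · refine sum_congr rfl fun l _ => ?_
    split_ifs with hl
    · rw [hn, Nat.cast_mul, Real.mul_rpow k.cast_nonneg l.cast_nonneg]
      simp only [map_mul, Complex.conj_ofReal]
      push_cast
      ring
    · rw [map_zero, mul_zero]
  · simp only [zero_mul]

theorem hasSum_rpow_mul_ite_lcm_dvd {k l : ℕ} (hk : k ≠ 0) (hl : l ≠ 0) {α : ℝ} (hα : 1 / 2 < α) :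
    HasSum (fun n : ℕ => (((k * l : ℕ) : ℝ) ^ α : ℝ) *
        if Nat.lcm k l ∣ n then 1 / (n : ℂ) ^ (2 * α : ℂ) else 0)
      (riemannZeta (2 * α) * (((Nat.gcd k l : ℝ) ^ (2 * α) / ((k * l : ℕ) : ℝ) ^ α : ℝ) : ℂ)) := by
  have hs : 1 < (2 * α : ℂ).re := by simp; linarith
  have hlcm : ((Nat.lcm k l : ℕ) : ℂ) ^ (2 * α : ℂ) = (((Nat.lcm k l : ℝ) ^ (2 * α) : ℝ) : ℂ) := by
    rw [Complex.ofReal_cpow (Nat.cast_nonneg _)]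
    push_cast
    rfl
  have hval : riemannZeta (2 * α) *
      (((Nat.gcd k l : ℝ) ^ (2 * α) / ((k * l : ℕ) : ℝ) ^ α : ℝ) : ℂ) =
      (((k * l : ℕ) : ℝ) ^ α : ℝ) * (riemannZeta (2 * α) / ((Nat.lcm k l : ℕ) : ℂ) ^ (2 * α : ℂ)) := by
    rw [← Nat.cast_mul_rpow_div_cast_lcm_rpow hk hl, hlcm]
    push_cast
    ring
  rw [hval]
  exact (hasSum_ite_dvd_one_div_cpow (Nat.lcm_ne_zero hk hl) hs).mul_left _

theorem gcd_sum_zeta_identity (α : ℝ) (hα : 1 / 2 < α)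
    (N : Finset ℕ) (hN : ∀ n ∈ N, 0 < n) (c : ℕ → ℂ) :
    Summable (fun n : ℕ =>
      ‖∑ k ∈ N.filter (· ∣ n), c k * (((k : ℝ) ^ α / (n : ℝ) ^ α : ℝ) : ℂ)‖ ^ 2) ∧
    (∑' n : ℕ,
        (‖∑ k ∈ N.filter (· ∣ n), c k * (((k : ℝ) ^ α / (n : ℝ) ^ α : ℝ) : ℂ)‖ ^ 2 : ℂ)) =
      riemannZeta (2 * α) *
        ∑ m ∈ N, ∑ n ∈ N, c m * (starRingEnd ℂ) (c n) *
          (((Nat.gcd m n : ℝ) ^ (2 * α) / ((m * n : ℕ) : ℝ) ^ α : ℝ) : ℂ) := by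
  have hasSum_sq : HasSum (fun n : ℕ =>
      (‖∑ k ∈ N.filter (· ∣ n), c k * (((k : ℝ) ^ α / (n : ℝ) ^ α : ℝ) : ℂ)‖ : ℂ) ^ 2)
      (riemannZeta (2 * α) *
        ∑ m ∈ N, ∑ n ∈ N, c m * (starRingEnd ℂ) (c n) *
          (((Nat.gcd m n : ℝ) ^ (2 * α) / ((m * n : ℕ) : ℝ) ^ α : ℝ) : ℂ)) := by
    simp only [sq_norm_sum_filter_dvd, mul_sum]
    refine hasSum_sum fun k hk => hasSum_sum fun l hl => ?_
    rw [mul_left_comm (riemannZeta _)]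
    exact (hasSum_rpow_mul_ite_lcm_dvd (hN k hk).ne' (hN l hl).ne' hα).mul_left _
  refine ⟨Complex.summable_ofReal.mp ?_, hasSum_sq.tsum_eq⟩
  exact hasSum_sq.summable.congr fun n => (Complex.ofReal_pow _ _).symm
end

section
/- Let p_1, …, p_r be distinct primes, let ℓ ≥ 1 be an integer, and set P = (p_1 ⋯ p_r)^{ℓ−1}. Then Σ_{m ∣ P} Σ_{n ∣ P} gcd(m,n)^2/(m n) = ∏_{i=1}^{r} ( ℓ + 2 Σ_{v=1}^{ℓ−1} (ℓ − v)/p_i^{v} ), where the outer sums range over all positive divisors m, n of P. -/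
open Finset

/-!
The double sum `galSum N` is a multiplicative function of `N`: for coprime `M` and `N` every
divisor of `MN` splits uniquely as a divisor of `M` times one of `N`, and `gcd(m,n)^2 / (mn)`
splits accordingly. For a prime power `p^k` the term of the pair `(p^a, p^b)` is `p^(-|a-b|)`,
and the `2(k+1-v)` pairs with `|a-b| = v ≥ 1` give the local factor.
-/

theorem Nat.Coprime.sum_divisors_mul_eq_sum_sum {M : Type*} [AddCommMonoid M] {m n : ℕ}
    (hmn : m.Coprime n) (f : ℕ → M) :
    ∑ d ∈ (m * n).divisors, f d = ∑ a ∈ m.divisors, ∑ b ∈ n.divisors, f (a * b) := by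
  rw [Nat.divisors_mul, Finset.mul_def, sum_image hmn.mul_injOn_divisors, sum_product]

theorem Nat.Coprime.gcd_mul_mul {a b c d : ℕ} (had : a.Coprime d) (hbc : b.Coprime c)
    (hcd : c.Coprime d) : (a * b).gcd (c * d) = a.gcd c * b.gcd d := by
  rw [hcd.gcd_mul, hbc.gcd_mul_right_cancel, had.gcd_mul_left_cancel]

theorem gcd_pow_pow_sq_div_mul {p : ℕ} (hp : p ≠ 0) (a b : ℕ) :
    ((p ^ a).gcd (p ^ b) : ℝ) ^ 2 / ((p ^ a : ℕ) * (p ^ b : ℕ)) = (p : ℝ)⁻¹ ^ a.dist b := by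
  wlog hab : a ≤ b generalizing a b
  · rw [Nat.gcd_comm, mul_comm, Nat.dist_comm]
    exact this b a (le_of_not_ge hab)
  have hp' : (p : ℝ) ≠ 0 := by exact_mod_cast hp
  obtain ⟨c, rfl⟩ := Nat.exists_eq_add_of_le hab
  rw [Nat.gcd_eq_left (pow_dvd_pow p hab), Nat.dist_eq_sub_of_le hab, Nat.add_sub_cancel_left]
  push_cast
  rw [pow_add, inv_pow]
  field_simp

theorem sum_range_pow_dist (x : ℝ) (n : ℕ) :
    ∑ a ∈ range n, x ^ a.dist n = ∑ v ∈ Icc 1 n, x ^ v := by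
  induction n with
  | zero => simp
  | succ n ih =>
    rw [sum_range_succ', sum_Icc_succ_top (by omega), ← ih]
    simp [Nat.dist_succ_succ, Nat.dist_eq_sub_of_le]

theorem sum_range_sum_range_pow_dist (x : ℝ) (k : ℕ) :
    ∑ a ∈ range (k + 1), ∑ b ∈ range (k + 1), x ^ a.dist b =
      (k + 1) + 2 * ∑ v ∈ Icc 1 k, ((k : ℝ) + 1 - v) * x ^ v := by
  induction k with
  | zero => simp
  | succ k ih =>
    have hdiag : ∑ a ∈ range (k + 1), x ^ (k + 1).dist a = ∑ v ∈ Icc 1 (k + 1), x ^ v := by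
      simp_rw [Nat.dist_comm (k + 1)]; exact sum_range_pow_dist x (k + 1)
    have htop : ∑ v ∈ Icc 1 (k + 1), ((k : ℝ) + 1 - v) * x ^ v =
        ∑ v ∈ Icc 1 k, ((k : ℝ) + 1 - v) * x ^ v := by
      simp [sum_Icc_succ_top]
    simp only [sum_range_succ _ (k + 1), sum_add_distrib, ih, sum_range_pow_dist, hdiag,
      Nat.dist_self]
    have hstep : ∑ v ∈ Icc 1 (k + 1), ((k : ℝ) + 1 + 1 - v) * x ^ v =
        ∑ v ∈ Icc 1 (k + 1), ((k : ℝ) + 1 - v) * x ^ v + ∑ v ∈ Icc 1 (k + 1), x ^ v := by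
      rw [← sum_add_distrib]
      exact sum_congr rfl fun v _ => by ring
    push_cast
    rw [hstep, htop, pow_zero]
    ring

noncomputable def galSum : ArithmeticFunction ℝ where
  toFun N := ∑ m ∈ N.divisors, ∑ n ∈ N.divisors, (m.gcd n : ℝ) ^ 2 / (m * n)
  map_zero' := by simp

theorem galSum_apply (N : ℕ) :
    galSum N = ∑ m ∈ N.divisors, ∑ n ∈ N.divisors, (m.gcd n : ℝ) ^ 2 / (m * n) := rfl

theorem isMultiplicative_galSum : galSum.IsMultiplicative := by
  refine ⟨by simp [galSum_apply], fun {m n} hmn => ?_⟩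
  simp only [galSum_apply, hmn.sum_divisors_mul_eq_sum_sum, sum_mul_sum]
  refine sum_congr rfl fun a ha => sum_congr rfl fun b hb => ?_
  refine sum_congr rfl fun c hc => sum_congr rfl fun d hd => ?_
  have hcop {x y : ℕ} (hx : x ∈ m.divisors) (hy : y ∈ n.divisors) : x.Coprime y :=
    (hmn.coprime_dvd_left (Nat.dvd_of_mem_divisors hx)).coprime_dvd_right
      (Nat.dvd_of_mem_divisors hy)
  rw [Nat.Coprime.gcd_mul_mul (hcop ha hd) (hcop hc hb).symm (hcop hc hd)]
  push_cast
  ring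

theorem galSum_prime_pow {p : ℕ} (hp : p.Prime) (k : ℕ) :
    galSum (p ^ k) = (k + 1) + 2 * ∑ v ∈ Icc 1 k, ((k : ℝ) + 1 - v) / (p : ℝ) ^ v := by
  simp only [galSum_apply, Nat.sum_divisors_prime_pow hp, gcd_pow_pow_sq_div_mul hp.ne_zero]
  rw [sum_range_sum_range_pow_dist]
  simp only [inv_pow, div_eq_mul_inv]

theorem gal_divisor_identity (r : ℕ) (p : Fin r → ℕ) (hp : ∀ i, (p i).Prime)
    (hinj : Function.Injective p) (ℓ : ℕ) (hℓ : 1 ≤ ℓ) :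
    ∑ m ∈ ((∏ i : Fin r, p i) ^ (ℓ - 1)).divisors,
      ∑ n ∈ ((∏ i : Fin r, p i) ^ (ℓ - 1)).divisors,
        (Nat.gcd m n : ℝ) ^ 2 / ((m : ℝ) * (n : ℝ)) =
      ∏ i : Fin r,
        ((ℓ : ℝ) + 2 * ∑ v ∈ Finset.Icc 1 (ℓ - 1), ((ℓ : ℝ) - (v : ℝ)) / (p i : ℝ) ^ v) := by
  obtain ⟨k, rfl⟩ : ∃ k, ℓ = k + 1 := ⟨ℓ - 1, by omega⟩
  have hcop : ((univ : Finset (Fin r)) : Set (Fin r)).Pairwise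
      (Function.onFun Nat.Coprime fun i => p i ^ k) :=
    fun i _ j _ hij => Nat.Coprime.pow k k <|
      (Nat.coprime_primes (hp i) (hp j)).2 (hinj.ne hij)
  rw [Nat.add_sub_cancel, ← galSum_apply, ← prod_pow, isMultiplicative_galSum.map_prod _ _ hcop]
  simp only [galSum_prime_pow (hp _), Nat.cast_add_one]
end

section
/- For every real y ≥ 2, the sum Σ 1/j over all positive integers j all of whose prime factors are at most y equals the finite product ∏_{p ≤ y, p prime} (1 − 1/p)^{−1}; moreover there exists an absolute constant C > 0 such that this quantity is at most C log y for all y ≥ 2. -/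
/-!
The identity is the Euler product over the primes `p ≤ y`, each factor summed as a geometric
series. For the bound, compare with the Euler product at `s = 1 + 1 / log y`: the product of the
`(1 - p ^ (-s))⁻¹` is at most `ζ(s) ≤ s / (s - 1) = 1 + log y`, while each `(1 - 1/p)⁻¹` exceeds
`(1 - p ^ (-s))⁻¹` by a factor of at most `exp (2 log p / (p log y))`. Mertens' estimate
`∑_{p ≤ y} log p / p ≤ log y + log 4`, which follows from Chebyshev's identity
`∑_{d ≤ n} Λ(d) ⌊n/d⌋ = log n!` and `θ(n) ≤ n log 4`, bounds the total correction by `e ^ 6`.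
-/

open Real Finset

noncomputable def natRpowInvHom (s : ℝ) : ℕ →* ℝ where
  toFun n := ((n : ℝ) ^ s)⁻¹
  map_one' := by simp
  map_mul' m n := by push_cast; rw [mul_rpow m.cast_nonneg n.cast_nonneg, mul_inv]

theorem hasSum_smoothNumbers_rpow_inv {s : ℝ} (hs : 0 < s) (N : ℕ) :
    HasSum (fun m : N.smoothNumbers ↦ (((m : ℕ) : ℝ) ^ s)⁻¹)
      (∏ p ∈ N.primesBelow, (1 - ((p : ℝ) ^ s)⁻¹)⁻¹) := by
  refine (EulerProduct.summable_and_hasSum_smoothNumbers_prod_primesBelow_geometric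
    (f := natRpowInvHom s) (fun {p} hp ↦ ?_) N).2
  have : 1 < (p : ℝ) ^ s := one_lt_rpow (Nat.one_lt_cast.mpr hp.one_lt) hs
  rw [natRpowInvHom, MonoidHom.coe_mk, OneHom.coe_mk, norm_inv, norm_of_nonneg (by positivity)]
  exact inv_lt_one_of_one_lt₀ this

theorem tsum_rpow_inv_le {s : ℝ} (hs : 1 < s) : ∑' n : ℕ, ((n : ℝ) ^ s)⁻¹ ≤ s / (s - 1) := by
  -- `ζ(s) = s / (s - 1) - s * ∫₁^∞ {x} x ^ (-s-1) dx`, and `termTSum s` is that integral.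
  have hzeta := ZetaAsymptotics.zeta_limit_aux1 hs
  have herror : 0 ≤ s * ZetaAsymptotics.termTSum s :=
    mul_nonneg (by linarith) (tsum_nonneg fun n ↦ ZetaAsymptotics.term_nonneg (n + 1) s)
  have hsum : Summable fun n : ℕ ↦ ((n : ℝ) ^ s)⁻¹ := by
    simpa [one_div] using summable_one_div_nat_rpow.mpr hs
  rw [hsum.tsum_eq_zero_add, Nat.cast_zero, zero_rpow (by linarith), inv_zero, zero_add,
    show s / (s - 1) = (s - 1)⁻¹ + 1 by field_simp [show s - 1 ≠ 0 by linarith]; ring]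
  simp only [one_div, Nat.cast_add, Nat.cast_one] at hzeta ⊢
  linarith

theorem prod_primesBelow_rpow_le {s : ℝ} (hs : 1 < s) (N : ℕ) :
    ∏ p ∈ N.primesBelow, (1 - ((p : ℝ) ^ s)⁻¹)⁻¹ ≤ s / (s - 1) := by
  rw [← (hasSum_smoothNumbers_rpow_inv (by linarith) N).tsum_eq]
  refine le_trans ?_ (tsum_rpow_inv_le hs)
  exact Summable.tsum_subtype_le (fun n : ℕ ↦ ((n : ℝ) ^ s)⁻¹) _ (fun n ↦ by positivity)
    (by simpa [one_div] using summable_one_div_nat_rpow.mpr hs)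

theorem mem_smoothNumbers_floor_add_one_iff (y : ℝ) (j : ℕ) :
    j ∈ (⌊y⌋₊ + 1).smoothNumbers ↔ 0 < j ∧ ∀ p : ℕ, p.Prime → p ∣ j → (p : ℝ) ≤ y := by
  rw [Nat.mem_smoothNumbers']
  refine ⟨fun h ↦ ⟨Nat.pos_of_ne_zero ?_, fun p hp hpj ↦ ?_⟩, fun h p hp hpj ↦ ?_⟩
  · rintro rfl
    obtain ⟨p, hp_ge, hp⟩ := Nat.exists_infinite_primes (⌊y⌋₊ + 1)
    exact (h p hp (dvd_zero p)).not_ge hp_ge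
  · exact (Nat.le_floor_iff' hp.ne_zero).mp (Nat.lt_succ_iff.mp (h p hp hpj))
  · exact Nat.lt_succ_iff.mpr ((Nat.le_floor_iff' hp.ne_zero).mpr (h.2 p hp hpj))

theorem tsum_smooth_inv_eq_prod (y : ℝ) :
    (∑' j : {j : ℕ // 0 < j ∧ ∀ p : ℕ, p.Prime → p ∣ j → (p : ℝ) ≤ y}, (1 : ℝ) / ((j : ℕ) : ℝ)) =
      ∏ p ∈ ⌊y⌋₊.primesLE, (1 - 1 / (p : ℝ))⁻¹ := by
  rw [← (Equiv.subtypeEquivRight (mem_smoothNumbers_floor_add_one_iff y)).tsum_eq]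
  have h := (hasSum_smoothNumbers_rpow_inv one_pos (⌊y⌋₊ + 1)).tsum_eq
  simp only [rpow_one, one_div] at h ⊢
  exact h

open ArithmeticFunction hiding log in
open scoped ArithmeticFunction.vonMangoldt in
theorem sum_primesLE_log_mul_div_le (n : ℕ) :
    ∑ p ∈ n.primesLE, log p * (n / p : ℕ) ≤ n * log n := by
  calc ∑ p ∈ n.primesLE, log p * (n / p : ℕ)
      = ∑ p ∈ n.primesLE, Λ p * (n / p : ℕ) := by
        refine sum_congr rfl fun p hp ↦ ?_
        rw [vonMangoldt_apply_prime (Nat.prime_of_mem_primesLE hp)]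
    _ ≤ ∑ d ∈ Ioc 0 n, Λ d * (n / d : ℕ) := by
        refine sum_le_sum_of_subset_of_nonneg (fun p hp ↦ ?_) fun d _ _ ↦ by positivity
        have := Nat.mem_primesLE.mp hp
        exact mem_Ioc.mpr ⟨this.2.pos, this.1⟩
    _ = ∑ d ∈ Ioc 0 n, log d := by
        rw [← sum_Ioc_mul_zeta_eq_sum, vonMangoldt_mul_zeta]; rfl
    _ ≤ ∑ _d ∈ Ioc 0 n, log n := sum_le_sum fun d hd ↦ by
        have := mem_Ioc.mp hd
        gcongr
        · exact_mod_cast this.1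
        · exact_mod_cast this.2
    _ = n * log n := by simp

theorem sum_primesLE_log_div_le (n : ℕ) :
    ∑ p ∈ n.primesLE, log p / p ≤ log n + log 4 := by
  rcases Nat.eq_zero_or_pos n with rfl | hn
  · simp [Real.log_nonneg]
  have hθ : ∑ p ∈ n.primesLE, log p ≤ log 4 * n := by
    rw [← Chebyshev.theta_eq_sum_primesLE_log]
    exact Chebyshev.theta_le_log4_mul_x n.cast_nonneg
  have hfloor (p : ℕ) : (n : ℝ) / p ≤ (n / p : ℕ) + 1 := by
    rw [← Nat.floor_div_eq_div (K := ℝ)]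
    exact (Nat.lt_floor_add_one _).le
  have key : n * ∑ p ∈ n.primesLE, log p / p ≤ n * (log n + log 4) := calc
    n * ∑ p ∈ n.primesLE, log p / p = ∑ p ∈ n.primesLE, log p * (n / p : ℝ) := by
      rw [mul_sum]; congr! 1 with p; ring
    _ ≤ ∑ p ∈ n.primesLE, (log p * (n / p : ℕ) + log p) := by
      gcongr with p hp
      rw [← mul_add_one]
      gcongr
      exact hfloor p
    _ ≤ n * log n + log 4 * n := by
      rw [sum_add_distrib]; gcongr; exact sum_primesLE_log_mul_div_le n
    _ = n * (log n + log 4) := by ring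
  exact le_of_mul_le_mul_left key (by positivity)

theorem one_sub_rpow_neg_le_mul_log {x : ℝ} (hx : 0 < x) (δ : ℝ) : 1 - x ^ (-δ) ≤ δ * log x := by
  rw [rpow_def_of_pos hx, show log x * -δ = -(δ * log x) by ring]
  linarith [one_sub_le_exp_neg (δ * log x)]

theorem inv_one_sub_le_mul_exp {a b : ℝ} (hba : b ≤ a) (ha : a ≤ 1 / 2) :
    (1 - a)⁻¹ ≤ (1 - b)⁻¹ * exp (2 * (a - b)) := by
  have ha1 : 0 < 1 - a := by linarith
  have hb1 : 0 < 1 - b := by linarith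
  calc (1 - a)⁻¹ = (1 - b)⁻¹ * ((1 - b) / (1 - a)) := by field_simp
    _ ≤ (1 - b)⁻¹ * (2 * (a - b) + 1) := by
      gcongr
      rw [div_le_iff₀ ha1]
      nlinarith
    _ ≤ (1 - b)⁻¹ * exp (2 * (a - b)) := by
      gcongr
      exact add_one_le_exp _

theorem inv_one_sub_inv_le_mul_exp {x δ : ℝ} (hx : 2 ≤ x) (hδ : 0 ≤ δ) :
    (1 - x⁻¹)⁻¹ ≤ (1 - (x ^ (1 + δ))⁻¹)⁻¹ * exp (2 * δ * log x / x) := by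
  have hx0 : 0 < x := by linarith
  have hsplit : (x ^ (1 + δ))⁻¹ = x⁻¹ * x ^ (-δ) := by
    rw [rpow_add hx0, rpow_one, rpow_neg hx0.le, mul_inv]
  have hle : x ^ (-δ) ≤ 1 := rpow_le_one_of_one_le_of_nonpos (by linarith) (by linarith)
  have hxinv : x⁻¹ ≤ 1 / 2 := by rw [one_div]; exact inv_anti₀ two_pos hx
  have hb : (x ^ (1 + δ))⁻¹ ≤ x⁻¹ := by
    rw [hsplit]; exact mul_le_of_le_one_right (by positivity) hle
  refine (inv_one_sub_le_mul_exp hb hxinv).trans <|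
    mul_le_mul_of_nonneg_left (exp_le_exp.mpr ?_) (inv_nonneg.mpr (by linarith))
  calc 2 * (x⁻¹ - (x ^ (1 + δ))⁻¹) = 2 * (1 - x ^ (-δ)) / x := by rw [hsplit]; ring
    _ ≤ 2 * (δ * log x) / x := by gcongr; exact one_sub_rpow_neg_le_mul_log hx0 δ
    _ = 2 * δ * log x / x := by ring

theorem prod_primesLE_inv_one_sub_inv_le (n : ℕ) {δ : ℝ} (hδ : 0 < δ) :
    ∏ p ∈ n.primesLE, (1 - 1 / (p : ℝ))⁻¹ ≤ (1 + δ) / δ * exp (2 * δ * (log n + log 4)) := by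
  have htwo {p : ℕ} (hp : p ∈ n.primesLE) : (2 : ℝ) ≤ p := by
    exact_mod_cast (Nat.prime_of_mem_primesLE hp).two_le
  calc ∏ p ∈ n.primesLE, (1 - 1 / (p : ℝ))⁻¹
      ≤ ∏ p ∈ n.primesLE, ((1 - ((p : ℝ) ^ (1 + δ))⁻¹)⁻¹ * exp (2 * δ * log p / p)) := by
        refine prod_le_prod (fun p hp ↦ ?_) fun p hp ↦ ?_
        · have := htwo hp
          have : 1 / (p : ℝ) ≤ 1 := by rw [div_le_one] <;> linarith
          exact inv_nonneg.mpr (by linarith)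
        · rw [one_div]; exact inv_one_sub_inv_le_mul_exp (htwo hp) hδ.le
    _ = (∏ p ∈ n.primesLE, (1 - ((p : ℝ) ^ (1 + δ))⁻¹)⁻¹) *
          exp (2 * δ * ∑ p ∈ n.primesLE, log p / p) := by
        rw [prod_mul_distrib, ← exp_sum, mul_sum]
        simp only [mul_div_assoc]
    _ ≤ (1 + δ) / δ * exp (2 * δ * (log n + log 4)) := by
        have hprod := prod_primesBelow_rpow_le (s := 1 + δ) (by linarith) (n + 1)
        rw [add_sub_cancel_left] at hprod
        gcongr
        exacts [hprod, sum_primesLE_log_div_le n]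

theorem prod_primesLE_floor_inv_one_sub_inv_le {y : ℝ} (hy : 2 ≤ y) :
    ∏ p ∈ ⌊y⌋₊.primesLE, (1 - 1 / (p : ℝ))⁻¹ ≤ 3 * exp 6 * log y := by
  have hlog2 : 1 / 2 < log 2 := by linarith [log_two_gt_d9]
  have hlogy : log 2 ≤ log y := log_le_log two_pos hy
  have hfloor : log ⌊y⌋₊ ≤ log y :=
    log_le_log (by exact_mod_cast Nat.floor_pos.mpr (by linarith)) (Nat.floor_le (by linarith))
  have hlog4 : log 4 = 2 * log 2 := by
    rw [show (4 : ℝ) = 2 ^ 2 by norm_num, log_pow, Nat.cast_ofNat]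
  have hL : 0 < log y := by linarith
  refine (prod_primesLE_inv_one_sub_inv_le ⌊y⌋₊ (inv_pos.mpr hL)).trans ?_
  have hfactor : (1 + (log y)⁻¹) / (log y)⁻¹ ≤ 3 * log y := by
    rw [show (1 + (log y)⁻¹) / (log y)⁻¹ = log y + 1 by field_simp]
    linarith
  have hexponent : 2 * (log y)⁻¹ * (log ⌊y⌋₊ + log 4) ≤ 6 := by
    rw [show 2 * (log y)⁻¹ * (log ⌊y⌋₊ + log 4) = 2 * (log ⌊y⌋₊ + log 4) / log y by ring,
      div_le_iff₀ hL]
    linarith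
  calc (1 + (log y)⁻¹) / (log y)⁻¹ * exp (2 * (log y)⁻¹ * (log ⌊y⌋₊ + log 4))
      ≤ 3 * log y * exp 6 := by gcongr
    _ = 3 * exp 6 * log y := by ring

theorem smooth_harmonic_sum :
    (∀ y : ℝ, 2 ≤ y →
      (∑' j : {j : ℕ // 0 < j ∧ ∀ p : ℕ, p.Prime → p ∣ j → (p : ℝ) ≤ y},
          (1 : ℝ) / ((j : ℕ) : ℝ)) =
        ∏ p ∈ (Finset.range (⌊y⌋₊ + 1)).filter Nat.Prime, (1 - 1 / (p : ℝ))⁻¹) ∧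
    ∃ C : ℝ, 0 < C ∧ ∀ y : ℝ, 2 ≤ y →
      (∑' j : {j : ℕ // 0 < j ∧ ∀ p : ℕ, p.Prime → p ∣ j → (p : ℝ) ≤ y},
          (1 : ℝ) / ((j : ℕ) : ℝ)) ≤ C * Real.log y := by
  refine ⟨fun y _ ↦ tsum_smooth_inv_eq_prod y, 3 * exp 6, by positivity, fun y hy ↦ ?_⟩
  rw [tsum_smooth_inv_eq_prod]
  exact prod_primesLE_floor_inv_one_sub_inv_le hy
end

section
/- For a prime p, a real α with 1/2 < α ≤ 1, and a positive integer ℓ, define E_ℓ(p, α) := (1/2π) ∫_{−π}^{π} |1 − e^{iθ} p^{−α}|^{−2ℓ} dθ. Then for each fixed α with 1/2 < α < 1 there exists a constant C(α) > 0, depending only on α, such that for every integer ℓ ≥ 3, the series Σ_p log E_ℓ(p, α) over all primes converges and satisfies Σ_p log E_ℓ(p, α) ≤ C(α) · ℓ^{1/α} / log ℓ. -/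
open Real

/-- `E ℓ p α = (1/2π) ∫_{-π}^{π} |1 - e^{iθ} p^{-α}|^{-2ℓ} dθ`, the `2ℓ`-th absolute moment
of `(1 - X(p)/p^α)⁻¹` where `X(p)` is uniform on the unit circle. -/
noncomputable def momentFactor (ℓ : ℕ) (p : ℕ) (α : ℝ) : ℝ :=
  (1 / (2 * π)) *
    ∫ θ in (-π)..π,
      (‖(1 : ℂ) - Complex.exp (Complex.I * θ) * (((p : ℝ) ^ (-α) : ℝ) : ℂ)‖ ^ (2 * ℓ))⁻¹

/-!
Write `r = p^{-α}`. Since `|1 - r e^{iθ}|² = 1 - 2r cos θ + r²`, `E_ℓ(p, α)` is the mean over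
`[-π, π]` of `(1 - 2r cos θ + r²)^{-ℓ}`. Bounding this integrand above or below by some
`b + a cos θ`, whose mean is `b` (with `1 + x ≤ eˣ ≤ 1 + x + x²` for `|x| ≤ 1`), gives `-ℓr² ≤ log E_ℓ ≤ 8ℓr` for `r ≤ 3/4`, and
`log E_ℓ ≤ 20ℓ²r²` once `2ℓr ≤ 1`; so `|log E_ℓ| ≤ 20ℓ²r²` always. Splitting the primes at
`T = (2ℓ)^{1/α}`, the sum is at most `8ℓ ∑_{p ≤ T} p^{-α} + 20ℓ² ∑_{p > T} p^{-2α}`.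
Chebyshev's bound — at most `2^{j+3}/(j+1)` primes in `[2^j, 2^{j+1})`, from
`primorial n ≤ 4^n` — makes these two sums `O(T^{1-α}/log T)` and `O(T^{1-2α}/log T)`, and
since `T^α = 2ℓ` both terms are `O(T / log T) = O(ℓ^{1/α} / log ℓ)`.
-/

open Finset

noncomputable def circleMoment (ℓ : ℕ) (r : ℝ) : ℝ :=
  (2 * π)⁻¹ * ∫ θ in (-π)..π, ((1 - 2 * r * cos θ + r ^ 2) ^ ℓ)⁻¹

lemma norm_one_sub_exp_mul_sq (r θ : ℝ) :
    ‖1 - Complex.exp (Complex.I * θ) * r‖ ^ 2 = 1 - 2 * r * cos θ + r ^ 2 := by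
  rw [mul_comm Complex.I, Complex.exp_mul_I, Complex.sq_norm, Complex.normSq_apply]
  simp only [Complex.sub_re, Complex.one_re, Complex.mul_re, Complex.add_re, Complex.add_im,
    Complex.mul_im, Complex.sub_im, Complex.one_im, Complex.ofReal_re, Complex.ofReal_im,
    Complex.I_re, Complex.I_im, Complex.cos_ofReal_re, Complex.sin_ofReal_re,
    Complex.cos_ofReal_im, Complex.sin_ofReal_im]
  nlinarith [sin_sq_add_cos_sq θ]

lemma momentFactor_eq_circleMoment (ℓ p : ℕ) (α : ℝ) :
    momentFactor ℓ p α = circleMoment ℓ ((p : ℝ) ^ (-α)) := by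
  simp only [momentFactor, circleMoment, one_div, pow_mul, norm_one_sub_exp_mul_sq]

lemma one_sub_two_mul_cos_add_sq_pos {r : ℝ} (hr : |r| < 1) (θ : ℝ) :
    0 < 1 - 2 * r * cos θ + r ^ 2 := by
  have hrc : r * cos θ ≤ |r| := (le_abs_self _).trans <| by
    rw [abs_mul]; exact mul_le_of_le_one_right (abs_nonneg r) (abs_cos_le_one θ)
  nlinarith [sq_abs r, mul_pos (sub_pos.2 hr) (sub_pos.2 hr)]

lemma continuous_circleMoment_integrand {r : ℝ} (hr : |r| < 1) (ℓ : ℕ) :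
    Continuous fun θ => ((1 - 2 * r * cos θ + r ^ 2) ^ ℓ)⁻¹ :=
  (by fun_prop : Continuous fun θ => (1 - 2 * r * cos θ + r ^ 2) ^ ℓ).inv₀ fun θ =>
    (pow_pos (one_sub_two_mul_cos_add_sq_pos hr θ) ℓ).ne'

lemma integral_add_mul_cos (a b : ℝ) : ∫ θ in (-π)..π, (b + a * cos θ) = 2 * π * b := by
  rw [intervalIntegral.integral_add (f := fun _ => b) (g := fun θ => a * cos θ)
    intervalIntegrable_const ((by fun_prop : Continuous fun θ => a * cos θ).intervalIntegrable _ _),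
    intervalIntegral.integral_const_mul,
    integral_cos, intervalIntegral.integral_const, sin_neg, sin_pi, smul_eq_mul]
  ring

lemma circleMoment_le_of_le {ℓ : ℕ} {r a b : ℝ} (hr : |r| < 1)
    (h : ∀ θ, ((1 - 2 * r * cos θ + r ^ 2) ^ ℓ)⁻¹ ≤ b + a * cos θ) : circleMoment ℓ r ≤ b := by
  have hint := intervalIntegral.integral_mono_on (μ := MeasureTheory.volume) (neg_le_self pi_pos.le)
    ((continuous_circleMoment_integrand hr ℓ).intervalIntegrable _ _)
    ((by fun_prop : Continuous fun θ => b + a * cos θ).intervalIntegrable _ _)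
    fun θ _ => h θ
  rw [integral_add_mul_cos] at hint
  rw [circleMoment, inv_mul_le_iff₀ (by positivity)]
  exact hint

lemma le_circleMoment_of_le {ℓ : ℕ} {r a b : ℝ} (hr : |r| < 1)
    (h : ∀ θ, b + a * cos θ ≤ ((1 - 2 * r * cos θ + r ^ 2) ^ ℓ)⁻¹) : b ≤ circleMoment ℓ r := by
  have hint := intervalIntegral.integral_mono_on (μ := MeasureTheory.volume) (neg_le_self pi_pos.le)
    ((by fun_prop : Continuous fun θ => b + a * cos θ).intervalIntegrable _ _)
    ((continuous_circleMoment_integrand hr ℓ).intervalIntegrable _ _)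
    fun θ _ => h θ
  rw [integral_add_mul_cos] at hint
  rw [circleMoment, le_inv_mul_iff₀ (by positivity)]
  exact hint

lemma exp_neg_mul_sq_le_circleMoment (ℓ : ℕ) {r : ℝ} (hr : |r| < 1) :
    exp (-(ℓ * r ^ 2)) ≤ circleMoment ℓ r := by
  refine le_circleMoment_of_le (a := exp (-(ℓ * r ^ 2)) * (2 * ℓ * r)) hr fun θ => ?_
  have hg := one_sub_two_mul_cos_add_sq_pos hr θ
  have hpow : (1 - 2 * r * cos θ + r ^ 2) ^ ℓ ≤ exp (r ^ 2 - 2 * r * cos θ) ^ ℓ :=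
    pow_le_pow_left₀ hg.le (by linarith [add_one_le_exp (r ^ 2 - 2 * r * cos θ)]) ℓ
  calc exp (-(ℓ * r ^ 2)) + exp (-(ℓ * r ^ 2)) * (2 * ℓ * r) * cos θ
      = exp (-(ℓ * r ^ 2)) * (2 * ℓ * r * cos θ + 1) := by ring
    _ ≤ exp (-(ℓ * r ^ 2)) * exp (2 * ℓ * r * cos θ) := by gcongr; exact add_one_le_exp _
    _ = (exp (r ^ 2 - 2 * r * cos θ) ^ ℓ)⁻¹ := by
      rw [← exp_nat_mul, ← exp_neg, ← exp_add]; ring_nf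
    _ ≤ ((1 - 2 * r * cos θ + r ^ 2) ^ ℓ)⁻¹ := inv_anti₀ (pow_pos hg ℓ) hpow

lemma circleMoment_pos (ℓ : ℕ) {r : ℝ} (hr : |r| < 1) : 0 < circleMoment ℓ r :=
  (exp_pos _).trans_le (exp_neg_mul_sq_le_circleMoment ℓ hr)

lemma neg_mul_sq_le_log_circleMoment (ℓ : ℕ) {r : ℝ} (hr : |r| < 1) :
    -(ℓ * r ^ 2) ≤ log (circleMoment ℓ r) :=
  (le_log_iff_exp_le (circleMoment_pos ℓ hr)).2 (exp_neg_mul_sq_le_circleMoment ℓ hr)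

lemma log_circleMoment_le_mul (ℓ : ℕ) {r : ℝ} (h0 : 0 ≤ r) (h1 : r ≤ 3 / 4) :
    log (circleMoment ℓ r) ≤ 8 * ℓ * r := by
  have hr : |r| < 1 := by rw [abs_of_nonneg h0]; linarith
  have hM : circleMoment ℓ r ≤ (((1 - r) ^ 2) ^ ℓ)⁻¹ :=
    circleMoment_le_of_le (a := 0) hr fun θ => by
      rw [zero_mul, add_zero]
      exact inv_anti₀ (pow_pos (pow_pos (by linarith) 2) ℓ) (pow_le_pow_left₀ (by positivity)
        (by nlinarith [cos_le_one θ]) ℓ)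
  have hlog : -(4 * r) ≤ log (1 - r) := by
    have hinv : (1 - r)⁻¹ ≤ 1 + 4 * r := by
      rw [inv_le_iff_one_le_mul₀ (by linarith)]; nlinarith
    linarith [one_sub_inv_le_log_of_pos (by linarith : 0 < 1 - r)]
  calc log (circleMoment ℓ r) ≤ log ((((1 - r) ^ 2) ^ ℓ)⁻¹) :=
        log_le_log (circleMoment_pos ℓ hr) hM
    _ = -(2 * ℓ * log (1 - r)) := by rw [log_inv, log_pow, log_pow]; push_cast; ring
    _ ≤ 8 * ℓ * r := by nlinarith [(Nat.cast_nonneg ℓ : (0 : ℝ) ≤ ℓ)]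

lemma inv_le_one_add_two_mul_add_sq {r c : ℝ} (h0 : 0 ≤ r) (h1 : r ≤ 1 / 2)
    (hc : |c| ≤ 1) : (1 - 2 * r * c + r ^ 2)⁻¹ ≤ 1 + (2 * r * c + 16 * r ^ 2) := by
  have hc' := abs_le.1 hc
  rw [inv_le_iff_one_le_mul₀ (by nlinarith)]
  have hc2 : c ^ 2 ≤ 1 := by rw [← sq_abs]; nlinarith [abs_nonneg c]
  nlinarith [mul_nonneg (sq_nonneg r) (sub_nonneg.2 h1), mul_nonneg (sq_nonneg r)
    (sq_nonneg (r - 1 / 2)), mul_nonneg (sq_nonneg r) (sub_nonneg.2 hc2),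
    mul_nonneg (pow_nonneg h0 3) (sub_nonneg.2 hc'.2)]

lemma circleMoment_le_exp_mul {ℓ : ℕ} (hℓ : 1 ≤ ℓ) {r : ℝ} (h0 : 0 ≤ r)
    (h : 2 * ℓ * r ≤ 1) : circleMoment ℓ r ≤ exp (16 * ℓ * r ^ 2) * (1 + 4 * ℓ ^ 2 * r ^ 2) := by
  have hℓ' : (1 : ℝ) ≤ ℓ := by exact_mod_cast hℓ
  have h1 : r ≤ 1 / 2 := by nlinarith
  have hr : |r| < 1 := by rw [abs_of_nonneg h0]; linarith
  refine circleMoment_le_of_le (a := exp (16 * ℓ * r ^ 2) * (2 * ℓ * r)) hr fun θ => ?_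
  have hx : |2 * ℓ * r * cos θ| ≤ 1 := by
    rw [abs_mul, abs_of_nonneg (by positivity : (0 : ℝ) ≤ 2 * ℓ * r)]
    nlinarith [abs_nonneg (cos θ), abs_cos_le_one θ]
  have hexp : exp (2 * ℓ * r * cos θ) ≤ 1 + 2 * ℓ * r * cos θ + 4 * ℓ ^ 2 * r ^ 2 := by
    have htaylor := (abs_le.1 (abs_exp_sub_one_sub_id_le hx)).2
    have hsq : (2 * ℓ * r * cos θ) ^ 2 ≤ 4 * ℓ ^ 2 * r ^ 2 := by
      rw [mul_pow]; nlinarith [cos_sq_le_one θ, sq_nonneg (2 * ℓ * r)]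
    linarith
  have hinv : (1 - 2 * r * cos θ + r ^ 2)⁻¹ ≤ exp (2 * r * cos θ + 16 * r ^ 2) :=
    (inv_le_one_add_two_mul_add_sq h0 h1 (abs_cos_le_one θ)).trans (by
      linarith [add_one_le_exp (2 * r * cos θ + 16 * r ^ 2)])
  calc ((1 - 2 * r * cos θ + r ^ 2) ^ ℓ)⁻¹
      = ((1 - 2 * r * cos θ + r ^ 2)⁻¹) ^ ℓ := (inv_pow _ _).symm
    _ ≤ exp (2 * r * cos θ + 16 * r ^ 2) ^ ℓ :=
      pow_le_pow_left₀ (inv_nonneg.2 (one_sub_two_mul_cos_add_sq_pos hr θ).le) hinv ℓ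
    _ = exp (16 * ℓ * r ^ 2) * exp (2 * ℓ * r * cos θ) := by
      rw [← exp_nat_mul, ← exp_add]; ring_nf
    _ ≤ exp (16 * ℓ * r ^ 2) * (1 + 2 * ℓ * r * cos θ + 4 * ℓ ^ 2 * r ^ 2) := by gcongr
    _ = _ := by ring

lemma log_circleMoment_le_sq {ℓ : ℕ} (hℓ : 1 ≤ ℓ) {r : ℝ} (h0 : 0 ≤ r) (h : 2 * ℓ * r ≤ 1) :
    log (circleMoment ℓ r) ≤ 20 * ℓ ^ 2 * r ^ 2 := by
  have hℓ' : (1 : ℝ) ≤ ℓ := by exact_mod_cast hℓ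
  have hℓℓ : (ℓ : ℝ) * r ^ 2 ≤ ℓ ^ 2 * r ^ 2 := by gcongr; nlinarith
  rw [log_le_iff_le_exp (circleMoment_pos ℓ (by rw [abs_of_nonneg h0]; nlinarith))]
  calc circleMoment ℓ r ≤ exp (16 * ℓ * r ^ 2) * (1 + 4 * ℓ ^ 2 * r ^ 2) :=
        circleMoment_le_exp_mul hℓ h0 h
    _ ≤ exp (16 * ℓ * r ^ 2) * exp (4 * ℓ ^ 2 * r ^ 2) := by
        gcongr; linarith [add_one_le_exp (4 * ℓ ^ 2 * r ^ 2)]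
    _ ≤ exp (20 * ℓ ^ 2 * r ^ 2) := by
        rw [← exp_add]; gcongr; linarith

lemma abs_log_circleMoment_le {ℓ : ℕ} (hℓ : 1 ≤ ℓ) {r : ℝ} (h0 : 0 ≤ r) (h1 : r ≤ 3 / 4) :
    |log (circleMoment ℓ r)| ≤ 20 * ℓ ^ 2 * r ^ 2 := by
  have hℓ' : (1 : ℝ) ≤ ℓ := by exact_mod_cast hℓ
  have hℓℓ : (ℓ : ℝ) * r ^ 2 ≤ ℓ ^ 2 * r ^ 2 := by gcongr; nlinarith
  have hlow := neg_mul_sq_le_log_circleMoment ℓ (by rw [abs_of_nonneg h0]; linarith : |r| < 1)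
  refine abs_le.2 ⟨by nlinarith [sq_nonneg r], ?_⟩
  rcases le_or_gt (2 * ℓ * r) 1 with h | h
  · exact log_circleMoment_le_sq hℓ h0 h
  · nlinarith [log_circleMoment_le_mul ℓ h0 h1]

lemma card_primes_Ico_two_pow_mul_le (j : ℕ) :
    #{p ∈ Ico (2 ^ j) (2 ^ (j + 1)) | p.Prime} * (j + 1) ≤ 2 ^ (j + 3) := by
  set S := {p ∈ Ico (2 ^ j) (2 ^ (j + 1)) | p.Prime}
  have hprod : 2 ^ (j * #S) ≤ 2 ^ 2 ^ (j + 2) :=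
    calc 2 ^ (j * #S) = (2 ^ j) ^ #S := pow_mul 2 j #S
      _ ≤ ∏ p ∈ S, p := pow_card_le_prod S _ _ fun p hp => (mem_Ico.1 (mem_filter.1 hp).1).1
      _ ≤ primorial (2 ^ (j + 1)) :=
        prod_le_prod_of_subset_of_one_le'
          (fun p hp => by
            rw [mem_filter, mem_Ico] at hp; exact mem_filter.2 ⟨mem_range.2 (by omega), hp.2⟩)
          fun p hp _ => (mem_filter.1 hp).2.one_lt.le
      _ ≤ 4 ^ 2 ^ (j + 1) := primorial_le_four_pow _
      _ = 2 ^ 2 ^ (j + 2) := by rw [show (4 : ℕ) = 2 ^ 2 by rfl, ← pow_mul]; ring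
  have hlog : j * #S ≤ 2 ^ (j + 2) := (Nat.pow_le_pow_iff_right (by norm_num)).1 hprod
  have hcard : #S ≤ 2 ^ j :=
    (card_filter_le _ _).trans (by rw [Nat.card_Ico, pow_succ]; omega)
  calc #S * (j + 1) = j * #S + #S := by ring
    _ ≤ 2 ^ (j + 2) + 2 ^ j := add_le_add hlog hcard
    _ ≤ 2 ^ (j + 3) := by rw [pow_add, pow_add 2 j 3]; omega

lemma sum_rpow_neg_le_of_log_eq {β : ℝ} (hβ : 0 ≤ β) {j : ℕ} {s : Finset Nat.Primes}
    (hs : ∀ p ∈ s, Nat.log 2 p = j) :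
    ∑ p ∈ s, (p : ℝ) ^ (-β) ≤ 8 * ((2 : ℝ) ^ (1 - β)) ^ j / (j + 1) := by
  have hmem : ∀ p ∈ s, (p : ℕ) ∈ Ico (2 ^ j) (2 ^ (j + 1)) := fun p hp => by
    rw [mem_Ico, ← hs p hp]
    exact ⟨Nat.pow_log_le_self 2 p.2.ne_zero, Nat.lt_pow_succ_log_self one_lt_two _⟩
  have hterm : ∀ p ∈ s, (p : ℝ) ^ (-β) ≤ ((2 : ℝ) ^ j) ^ (-β) := fun p hp =>
    rpow_le_rpow_of_nonpos (by positivity) (by exact_mod_cast (mem_Ico.1 (hmem p hp)).1)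
      (neg_nonpos.2 hβ)
  have hcard : (#s : ℝ) * (j + 1) ≤ 2 ^ (j + 3) := by
    have := (card_le_card_of_injOn (t := {p ∈ Ico (2 ^ j) (2 ^ (j + 1)) | p.Prime})
      (fun p : Nat.Primes => (p : ℕ)) (fun p hp => mem_filter.2 ⟨hmem p hp, p.2⟩)
      Subtype.val_injective.injOn)
    exact_mod_cast (Nat.mul_le_mul_right _ this).trans (card_primes_Ico_two_pow_mul_le j)
  calc ∑ p ∈ s, (p : ℝ) ^ (-β) ≤ #s * ((2 : ℝ) ^ j) ^ (-β) := by
        simpa using sum_le_card_nsmul s _ _ hterm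
    _ ≤ 2 ^ (j + 3) / (j + 1) * ((2 : ℝ) ^ j) ^ (-β) := by
        gcongr; rw [le_div_iff₀ (by positivity)]; exact hcard
    _ = 8 * ((2 : ℝ) ^ j * ((2 : ℝ) ^ j) ^ (-β)) / (j + 1) := by ring
    _ = 8 * ((2 : ℝ) ^ (1 - β)) ^ j / (j + 1) := by
        rw [rpow_pow_comm zero_le_two, sub_eq_add_neg, rpow_add (by positivity), rpow_one]

lemma sum_rpow_neg_le_sum_image_log {β : ℝ} (hβ : 0 ≤ β) (s : Finset Nat.Primes) :
    ∑ p ∈ s, (p : ℝ) ^ (-β) ≤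
      ∑ j ∈ s.image (fun p : Nat.Primes => Nat.log 2 p), 8 * ((2 : ℝ) ^ (1 - β)) ^ j / (j + 1) := by
  rw [← sum_fiberwise_of_maps_to fun p hp =>
    mem_image_of_mem (fun p : Nat.Primes => Nat.log 2 p) hp]
  exact sum_le_sum fun j _ => sum_rpow_neg_le_of_log_eq hβ fun p hp => (mem_filter.1 hp).2

lemma summable_succ_mul_geometric {ρ : ℝ} (h0 : 0 ≤ ρ) (h1 : ρ < 1) :
    Summable fun m : ℕ => ((m : ℝ) + 1) * ρ ^ m := by
  have hρ : ‖ρ‖ < 1 := by rwa [norm_of_nonneg h0]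
  exact ((summable_pow_mul_geometric_of_norm_lt_one 1 hρ).add
    (summable_geometric_of_norm_lt_one hρ)).congr fun m => by ring

lemma sum_range_pow_div_succ_le {q : ℝ} (hq : 1 < q) (J : ℕ) :
    ∑ j ∈ range (J + 1), q ^ j / (j + 1) ≤
      (∑' m : ℕ, (m + 1) * q⁻¹ ^ m) * (q ^ J / (J + 1)) := by
  have hq0 : 0 < q := one_pos.trans hq
  have hterm : ∀ j ∈ range (J + 1), q ^ j / (j + 1) ≤
      ((((J - j : ℕ) : ℝ) + 1) * q⁻¹ ^ (J - j)) * (q ^ J / (J + 1)) := fun j hj => by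
    have hjJ : j ≤ J := Nat.lt_succ_iff.1 (mem_range.1 hj)
    have hpow : q ^ j = q ^ J * q⁻¹ ^ (J - j) := by
      rw [inv_pow, ← div_eq_mul_inv, eq_div_iff (pow_ne_zero _ hq0.ne'), ← pow_add,
        Nat.add_sub_of_le hjJ]
    have hJ : (J : ℝ) + 1 ≤ (((J - j : ℕ) : ℝ) + 1) * (j + 1) := by
      rw [Nat.cast_sub hjJ]
      nlinarith [(Nat.cast_le.2 hjJ : (j : ℝ) ≤ J), (j.cast_nonneg : (0 : ℝ) ≤ j)]
    rw [hpow, div_le_iff₀ (by positivity)]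
    calc q ^ J * q⁻¹ ^ (J - j) = (q ^ J * q⁻¹ ^ (J - j) / (J + 1)) * (J + 1) := by field_simp
      _ ≤ (q ^ J * q⁻¹ ^ (J - j) / (J + 1)) * ((((J - j : ℕ) : ℝ) + 1) * (j + 1)) := by gcongr
      _ = _ := by ring
  calc ∑ j ∈ range (J + 1), q ^ j / (j + 1)
      ≤ ∑ j ∈ range (J + 1), ((((J - j : ℕ) : ℝ) + 1) * q⁻¹ ^ (J - j)) * (q ^ J / (J + 1)) :=
        sum_le_sum hterm
    _ = (∑ m ∈ range (J + 1), ((m : ℝ) + 1) * q⁻¹ ^ m) * (q ^ J / (J + 1)) := by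
        rw [← sum_mul, ← sum_range_reflect (fun m => ((m : ℝ) + 1) * q⁻¹ ^ m)]
        simp only [Nat.add_sub_cancel]
    _ ≤ _ := by
        gcongr
        exact (summable_succ_mul_geometric (inv_nonneg.2 hq0.le)
          (inv_lt_one_of_one_lt₀ hq)).sum_le_tsum _ fun m _ => by positivity

lemma sum_pow_div_succ_le_of_le {q : ℝ} (hq0 : 0 ≤ q) (hq1 : q < 1) {J : ℕ} {t : Finset ℕ}
    (ht : ∀ j ∈ t, J ≤ j) : ∑ j ∈ t, q ^ j / (j + 1) ≤ (1 - q)⁻¹ * (q ^ J / (J + 1)) := by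
  have hsub : t ⊆ Ico J (t.sup id + 1) := fun j hj =>
    mem_Ico.2 ⟨ht j hj, Nat.lt_succ_of_le (le_sup (f := id) hj)⟩
  calc ∑ j ∈ t, q ^ j / (j + 1) ≤ ∑ j ∈ t, q ^ j / (J + 1) :=
        sum_le_sum fun j hj => by gcongr; exact_mod_cast ht j hj
    _ ≤ (∑ j ∈ Ico J (t.sup id + 1), q ^ j) / (J + 1) := by
        rw [← sum_div]; gcongr
    _ ≤ q ^ J / (1 - q) / (J + 1) := by gcongr; exact geom_sum_Ico_le_of_lt_one hq0 hq1
    _ = _ := by ring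

lemma inv_succ_le_log_two_div_log {T : ℝ} (hT : 1 < T) {J : ℕ} (hTJ : T < 2 ^ (J + 1)) :
    ((J : ℝ) + 1)⁻¹ ≤ log 2 / log T := by
  have hlog : log T < (J + 1) * log 2 := by
    simpa using log_lt_log (by linarith) hTJ
  rw [inv_le_iff_one_le_mul₀ (by positivity), div_mul_eq_mul_div, le_div_iff₀ (log_pos hT)]
  linarith

theorem exists_sum_rpow_neg_le_of_le {β : ℝ} (hβ0 : 0 ≤ β) (hβ1 : β < 1) :
    ∃ C > 0, ∀ T : ℝ, 2 ≤ T → ∀ s : Finset Nat.Primes, (∀ p ∈ s, (p : ℝ) ≤ T) →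
      ∑ p ∈ s, (p : ℝ) ^ (-β) ≤ C * T ^ (1 - β) / log T := by
  set q : ℝ := 2 ^ (1 - β)
  have hq : 1 < q := one_lt_rpow one_lt_two (by linarith)
  set K := ∑' m : ℕ, ((m : ℝ) + 1) * q⁻¹ ^ m
  have hK : 0 < K :=
    (summable_succ_mul_geometric (inv_nonneg.2 (by positivity))
      (inv_lt_one_of_one_lt₀ hq)).tsum_pos (fun m => by positivity) 0 (by simp)
  refine ⟨8 * K * log 2, by positivity, fun T hT s hs => ?_⟩
  obtain ⟨J, hJT, hTJ⟩ := exists_nat_pow_near (by linarith : 1 ≤ T) one_lt_two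
  have himage : s.image (fun p : Nat.Primes => Nat.log 2 p) ⊆ range (J + 1) := by
    intro j hj
    obtain ⟨p, hp, rfl⟩ := mem_image.1 hj
    refine mem_range.2 (Nat.log_lt_of_lt_pow p.2.ne_zero ?_)
    exact_mod_cast (hs p hp).trans_lt hTJ
  calc ∑ p ∈ s, (p : ℝ) ^ (-β)
      ≤ ∑ j ∈ s.image (fun p : Nat.Primes => Nat.log 2 p), 8 * q ^ j / (j + 1) :=
        sum_rpow_neg_le_sum_image_log hβ0 s
    _ ≤ ∑ j ∈ range (J + 1), 8 * q ^ j / (j + 1) :=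
        sum_le_sum_of_subset_of_nonneg himage fun _ _ _ => by positivity
    _ ≤ 8 * (K * (q ^ J / (J + 1))) := by
        simp only [mul_div_assoc, ← mul_sum]; gcongr; exact sum_range_pow_div_succ_le hq J
    _ ≤ 8 * (K * (T ^ (1 - β) * (log 2 / log T))) := by
        rw [div_eq_mul_inv (q ^ J), rpow_pow_comm zero_le_two]
        gcongr 8 * (K * ?_)
        exact mul_le_mul (rpow_le_rpow (by positivity) hJT (by linarith))
          (inv_succ_le_log_two_div_log (by linarith) hTJ) (by positivity) (by positivity)
    _ = 8 * K * log 2 * T ^ (1 - β) / log T := by ring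

theorem exists_sum_rpow_neg_le_of_lt {β : ℝ} (hβ : 1 < β) :
    ∃ C > 0, ∀ T : ℝ, 2 ≤ T → ∀ s : Finset Nat.Primes, (∀ p ∈ s, T < p) →
      ∑ p ∈ s, (p : ℝ) ^ (-β) ≤ C * T ^ (1 - β) / log T := by
  set q : ℝ := 2 ^ (1 - β)
  have hq0 : 0 < q := by positivity
  have hq1 : q < 1 := rpow_lt_one_of_one_lt_of_neg one_lt_two (by linarith)
  refine ⟨8 * (1 - q)⁻¹ * 2 ^ (β - 1) * log 2, by
    have : 0 < 1 - q := by linarith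
    positivity, fun T hT s hs => ?_⟩
  obtain ⟨J, hJT, hTJ⟩ := exists_nat_pow_near (by linarith : 1 ≤ T) one_lt_two
  have himage : ∀ j ∈ s.image (fun p : Nat.Primes => Nat.log 2 p), J ≤ j := by
    intro j hj
    obtain ⟨p, hp, rfl⟩ := mem_image.1 hj
    exact Nat.le_log_of_pow_le one_lt_two (by exact_mod_cast hJT.trans (hs p hp).le)
  have hqJ : q ^ J ≤ 2 ^ (β - 1) * T ^ (1 - β) := by
    rw [rpow_pow_comm zero_le_two]
    calc ((2 : ℝ) ^ J) ^ (1 - β) ≤ (T / 2) ^ (1 - β) :=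
          rpow_le_rpow_of_nonpos (by positivity) (by rw [pow_succ] at hTJ; linarith) (by linarith)
      _ = 2 ^ (β - 1) * T ^ (1 - β) := by
          rw [div_rpow (by linarith) zero_le_two, div_eq_mul_inv, ← rpow_neg zero_le_two]
          ring_nf
  calc ∑ p ∈ s, (p : ℝ) ^ (-β)
      ≤ ∑ j ∈ s.image (fun p : Nat.Primes => Nat.log 2 p), 8 * q ^ j / (j + 1) :=
        sum_rpow_neg_le_sum_image_log (by linarith) s
    _ ≤ 8 * ((1 - q)⁻¹ * (q ^ J / (J + 1))) := by
        simp only [mul_div_assoc, ← mul_sum]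
        gcongr
        exact sum_pow_div_succ_le_of_le hq0.le hq1 himage
    _ ≤ 8 * ((1 - q)⁻¹ * (2 ^ (β - 1) * T ^ (1 - β) * (log 2 / log T))) := by
        have : 0 < 1 - q := by linarith
        rw [div_eq_mul_inv (q ^ J)]
        gcongr 8 * ((1 - q)⁻¹ * ?_)
        exact mul_le_mul hqJ (inv_succ_le_log_two_div_log (by linarith) hTJ) (by positivity)
          (by positivity)
    _ = 8 * (1 - q)⁻¹ * 2 ^ (β - 1) * log 2 * T ^ (1 - β) / log T := by ring

lemma rpow_neg_le_three_quarters {x α : ℝ} (hx : 2 ≤ x) (hα : 1 / 2 ≤ α) : x ^ (-α) ≤ 3 / 4 :=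
  calc x ^ (-α) ≤ x ^ (-(1 / 2 : ℝ)) := rpow_le_rpow_of_exponent_le (by linarith) (by linarith)
    _ = (√x)⁻¹ := by rw [rpow_neg (by linarith), sqrt_eq_rpow]
    _ ≤ 3 / 4 := by
      rw [inv_le_comm₀ (by positivity) (by norm_num), le_sqrt (by norm_num) (by linarith)]
      linarith

lemma abs_log_momentFactor_le {ℓ : ℕ} (hℓ : 1 ≤ ℓ) {α : ℝ} (hα : 1 / 2 ≤ α) (p : Nat.Primes) :
    |log (momentFactor ℓ p α)| ≤ 20 * ℓ ^ 2 * (p : ℝ) ^ (-(2 * α)) := by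
  have hp : (2 : ℝ) ≤ p := by exact_mod_cast p.2.two_le
  rw [momentFactor_eq_circleMoment, show (p : ℝ) ^ (-(2 * α)) = ((p : ℝ) ^ (-α)) ^ 2 by
    rw [← rpow_natCast, ← rpow_mul (by positivity)]; ring_nf]
  exact abs_log_circleMoment_le hℓ (by positivity) (rpow_neg_le_three_quarters hp hα)

lemma log_momentFactor_le (ℓ : ℕ) {α : ℝ} (hα : 1 / 2 ≤ α) (p : Nat.Primes) :
    log (momentFactor ℓ p α) ≤ 8 * ℓ * (p : ℝ) ^ (-α) := by
  have hp : (2 : ℝ) ≤ p := by exact_mod_cast p.2.two_le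
  rw [momentFactor_eq_circleMoment]
  exact log_circleMoment_le_mul ℓ (by positivity) (rpow_neg_le_three_quarters hp hα)

lemma summable_log_momentFactor {ℓ : ℕ} (hℓ : 1 ≤ ℓ) {α : ℝ} (hα : 1 / 2 < α) :
    Summable fun p : Nat.Primes => log (momentFactor ℓ p α) :=
  ((Nat.Primes.summable_rpow (r := -(2 * α)).2 (by linarith)).mul_left
    (20 * (ℓ : ℝ) ^ 2)).of_norm_bounded fun p => abs_log_momentFactor_le hℓ hα.le p

lemma tsum_log_momentFactor_le {ℓ : ℕ} (hℓ : 1 ≤ ℓ) {α : ℝ} (hα : 1 / 2 < α) {T B₁ B₂ : ℝ}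
    (h₁ : ∀ s : Finset Nat.Primes, (∀ p ∈ s, (p : ℝ) ≤ T) → ∑ p ∈ s, (p : ℝ) ^ (-α) ≤ B₁)
    (h₂ : ∀ s : Finset Nat.Primes, (∀ p ∈ s, T < p) → ∑ p ∈ s, (p : ℝ) ^ (-(2 * α)) ≤ B₂) :
    ∑' p : Nat.Primes, log (momentFactor ℓ p α) ≤ 8 * ℓ * B₁ + 20 * ℓ ^ 2 * B₂ := by
  refine (summable_log_momentFactor hℓ hα).tsum_le_of_sum_le fun s => ?_
  rw [← sum_filter_add_sum_filter_not s fun p : Nat.Primes => (p : ℝ) ≤ T]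
  gcongr ?_ + ?_
  · calc _ ≤ ∑ p ∈ s with ((p : Nat.Primes) : ℝ) ≤ T, 8 * ℓ * (p : ℝ) ^ (-α) :=
          sum_le_sum fun p _ => log_momentFactor_le ℓ hα.le p
      _ ≤ 8 * ℓ * B₁ := by
          rw [← mul_sum]; gcongr; exact h₁ _ fun p hp => (mem_filter.1 hp).2
  · calc _ ≤ ∑ p ∈ s with ¬((p : Nat.Primes) : ℝ) ≤ T, 20 * ℓ ^ 2 * (p : ℝ) ^ (-(2 * α)) :=
          sum_le_sum fun p _ => le_of_abs_le (abs_log_momentFactor_le hℓ hα.le p)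
      _ ≤ 20 * ℓ ^ 2 * B₂ := by
          rw [← mul_sum]; gcongr; exact h₂ _ fun p hp => not_le.1 (mem_filter.1 hp).2

lemma two_mul_rpow_one_div_le {x α : ℝ} (hx : 0 ≤ x) (hα : 1 / 2 ≤ α) :
    (2 * x) ^ (1 / α) ≤ 4 * x ^ (1 / α) := by
  rw [mul_rpow zero_le_two hx]
  gcongr
  calc (2 : ℝ) ^ (1 / α) ≤ 2 ^ (2 : ℝ) :=
        rpow_le_rpow_of_exponent_le one_le_two (by rw [div_le_iff₀] <;> linarith)
    _ = 4 := by norm_num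

theorem log_moment_bound_alpha_lt_one (α : ℝ) (hα₁ : 1 / 2 < α) (hα₂ : α < 1) :
    ∃ C : ℝ, 0 < C ∧ ∀ ℓ : ℕ, 3 ≤ ℓ →
      Summable (fun p : Nat.Primes => Real.log (momentFactor ℓ (p : ℕ) α)) ∧
      (∑' p : Nat.Primes, Real.log (momentFactor ℓ (p : ℕ) α)) ≤
        C * (ℓ : ℝ) ^ (1 / α) / Real.log ℓ := by
  obtain ⟨C₁, hC₁, h₁⟩ := exists_sum_rpow_neg_le_of_le (by linarith : 0 ≤ α) hα₂
  obtain ⟨C₂, hC₂, h₂⟩ := exists_sum_rpow_neg_le_of_lt (by linarith : 1 < 2 * α)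
  refine ⟨16 * C₁ + 20 * C₂, by positivity, fun ℓ hℓ => ?_⟩
  have hℓ' : (3 : ℝ) ≤ ℓ := by exact_mod_cast hℓ
  refine ⟨summable_log_momentFactor (by omega) hα₁, ?_⟩
  -- the cut-off beyond which `2 ℓ p^{-α} < 1`
  set T := (2 * ℓ : ℝ) ^ (1 / α)
  have hℓT : 2 * ℓ ≤ T := self_le_rpow_of_one_le (by linarith) (by rw [le_div_iff₀] <;> linarith)
  have hTα : T ^ α = 2 * ℓ := by
    rw [← rpow_mul (by positivity), one_div_mul_cancel (by linarith), rpow_one]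
  have hT2α : T ^ (2 * α) = (2 * ℓ) ^ 2 := by rw [mul_comm, rpow_mul (by linarith), hTα, rpow_two]
  calc ∑' p : Nat.Primes, log (momentFactor ℓ p α)
      ≤ 8 * ℓ * (C₁ * T ^ (1 - α) / log T) + 20 * ℓ ^ 2 * (C₂ * T ^ (1 - 2 * α) / log T) :=
        tsum_log_momentFactor_le (by omega) hα₁ (h₁ T (by linarith)) (h₂ T (by linarith))
    _ = (4 * C₁ + 5 * C₂) * T / log T := by
        rw [rpow_sub (by linarith), rpow_sub (by linarith), rpow_one, hTα, hT2α]
        field_simp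
        ring
    _ ≤ (4 * C₁ + 5 * C₂) * (4 * ℓ ^ (1 / α)) / log ℓ := by
        gcongr
        · exact log_pos (by linarith)
        · exact two_mul_rpow_one_div_le (by positivity) hα₁.le
        · linarith
    _ = (16 * C₁ + 20 * C₂) * ℓ ^ (1 / α) / log ℓ := by ring
end
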